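/- arXiv:cs/9907011 — 6 statements merged into one kernel-verified Lean document; each statement's English description precedes it below -/
import Mathlib

section
/- Let p_{1,1},…,p_{1,k_1},…,p_{q,1},…,p_{q,k_q} be K = k_1+⋯+k_q pairwise distinct prime numbers, let b_{i,j} ∈ {0,1} be arbitrary bits, and for each i set π_i = Σ_{j=1}^{k_i} (−1)^{b_{i,j}} √p_{i,j}. Let Q(x_1,…,x_q) be a polynomial with integer coefficients such that for each i the degree of Q in the variable x_i is strictly less than 2^{k_i}. Then Q is not the identically zero polynomial if and only if Q(π_1,…,π_q) ≠ 0. -/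
/-!
The products `∏_{s ∈ S} x_s`, where `x_s = ±√p_s` for distinct primes `p_s`, are linearly
independent over `ℚ` (Besicovitch): by induction on the adjoined primes, no square root of a
squarefree `m > 1` coprime to them lies in `ℚ(x_s : s ∈ S)`. Modulo the relations
`x_s² = p_s` an integer polynomial in the `x_s` reduces to a combination of these squarefree
monomials whose coefficients do not depend on the signs, so a polynomial relation among the
`π_i` survives every sign change `√p ↦ -√p`. Hence `Q` vanishes on the grid whose `i`-th
factor consists of the `2 ^ k_i` signed sums (pairwise distinct by the same independence), and
the combinatorial Nullstellensatz forces `Q = 0`.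
-/

open Function Finset

theorem prod_mul_eq_smul_prod_symmDiff {R A I : Type*} [CommSemiring R] [CommSemiring A]
    [Algebra R A] [DecidableEq I] {x : I → A} {s : I} {c : R}
    (hs : x s ^ 2 = algebraMap R A c) (S : Finset I) :
    (∏ t ∈ S, x t) * x s = (if s ∈ S then c else 1) • ∏ t ∈ symmDiff S {s}, x t := by
  by_cases hsS : s ∈ S
  · have : symmDiff S {s} = S.erase s := by ext t; by_cases t = s <;> simp_all [mem_symmDiff]
    rw [if_pos hsS, this, ← mul_prod_erase S x hsS, Algebra.smul_def, ← hs]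
    ring
  · have : symmDiff S {s} = insert s S := by ext t; by_cases t = s <;> simp_all [mem_symmDiff]
    rw [if_neg hsS, this, prod_insert hsS, one_smul, mul_comm]

theorem MvPolynomial.exists_aeval_eq_sum_prod_of_sq_eq {R A I : Type*} [CommSemiring R]
    [CommSemiring A] [Algebra R A] [Fintype I] (d : I → R) (P : MvPolynomial I R) :
    ∃ c : Finset I → R, ∀ x : I → A, (∀ s, x s ^ 2 = algebraMap R A (d s)) →
      aeval x P = ∑ S, c S • ∏ s ∈ S, x s := by
  classical
  induction P using MvPolynomial.induction_on with
  | C a =>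
    refine ⟨Pi.single ∅ a, fun x _ => ?_⟩
    rw [Fintype.sum_eq_single ∅ fun S hS => by rw [Pi.single_eq_of_ne hS, zero_smul]]
    simp [Algebra.algebraMap_eq_smul_one]
  | add P P' hP hP' =>
    obtain ⟨c, hc⟩ := hP
    obtain ⟨c', hc'⟩ := hP'
    refine ⟨c + c', fun x hx => ?_⟩
    simp only [map_add, hc x hx, hc' x hx, Pi.add_apply, add_smul, sum_add_distrib]
  | mul_X P s hP =>
    obtain ⟨c, hc⟩ := hP
    let e := (symmDiff_left_involutive ({s} : Finset I)).toPerm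
    refine ⟨fun T => (if s ∈ e T then d s else 1) * c (e T), fun x hx => ?_⟩
    rw [map_mul, aeval_X, hc x hx, sum_mul]
    refine Fintype.sum_equiv e _ _ fun S => ?_
    rw [smul_mul_assoc, prod_mul_eq_smul_prod_symmDiff (hx s), smul_smul, mul_comm]
    simp [e]

open IntermediateField in
theorem IntermediateField.exists_eq_add_mul_of_sq_eq {F L : Type*} [Field F] [Field L]
    [Algebra F L] {α x : L} {c : F} (hα : α ^ 2 = algebraMap F L c) (hx : x ∈ F⟮α⟯) :
    ∃ a b : F, x = algebraMap F L a + algebraMap F L b * α := by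
  have hint : IsIntegral F α :=
    ⟨.X ^ 2 - .C c, Polynomial.monic_X_pow_sub_C c two_ne_zero, by simp [hα]⟩
  rw [← mem_toSubalgebra, adjoin_simple_toSubalgebra_of_isAlgebraic hint.isAlgebraic] at hx
  induction hx using Algebra.adjoin_induction with
  | mem y hy => exact ⟨0, 1, by simp_all⟩
  | algebraMap a => exact ⟨a, 0, by simp⟩
  | add y z _ _ hy hz =>
    obtain ⟨a, b, rfl⟩ := hy
    obtain ⟨a', b', rfl⟩ := hz
    exact ⟨a + a', b + b', by simp only [map_add]; ring⟩
  | mul y z _ _ hy hz =>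
    obtain ⟨a, b, rfl⟩ := hy
    obtain ⟨a', b', rfl⟩ := hz
    refine ⟨a * a' + b * b' * c, a * b' + a' * b, ?_⟩
    simp only [map_add, map_mul, ← hα]
    ring

theorem Squarefree.eq_one_of_sq_eq_natCast {m : ℕ} (hm : Squarefree m) {r : ℚ}
    (hr : r ^ 2 = m) : m = 1 := by
  obtain ⟨t, rfl⟩ := Rat.isSquare_natCast_iff.mp ⟨r, by rw [← hr, sq]⟩
  rw [Nat.isUnit_iff.mp (hm t dvd_rfl), mul_one]

section SqrtPrimes

variable {I : Type*} {p : I → ℕ} {x : I → ℝ}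

theorem notMem_adjoin_of_sq_eq (hp : ∀ s, (p s).Prime) (hinj : Injective p)
    (hx : ∀ s, x s ^ 2 = p s) (S : Finset I) {m : ℕ} (hm : Squarefree m) (hm1 : m ≠ 1)
    (hdvd : ∀ s ∈ S, ¬p s ∣ m) {y : ℝ} (hy : y ^ 2 = m) :
    y ∉ IntermediateField.adjoin ℚ (x '' S) := by
  classical
  induction S using Finset.induction_on generalizing m y with
  | empty =>
    rintro hyQ
    rw [coe_empty, Set.image_empty, IntermediateField.adjoin_empty,
      IntermediateField.mem_bot] at hyQ
    obtain ⟨r, rfl⟩ := hyQ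
    exact hm1 (hm.eq_one_of_sq_eq_natCast (r := r) (by rw [eq_ratCast] at hy; exact_mod_cast hy))
  | @insert s₀ T hs₀ ih =>
    set K := IntermediateField.adjoin ℚ (x '' T)
    intro hyK
    replace hyK : y ∈ IntermediateField.adjoin K {x s₀} := by
      rwa [coe_insert, Set.image_insert_eq, ← Set.union_singleton,
        ← IntermediateField.adjoin_adjoin_left] at hyK
    obtain ⟨⟨a, ha⟩, ⟨b, hb⟩, rfl⟩ := IntermediateField.exists_eq_add_mul_of_sq_eq
      (c := (p s₀ : K)) (by rw [hx]; rfl) hyK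
    simp only [IntermediateField.algebraMap_apply] at hy ⊢
    have hsq : a ^ 2 + b ^ 2 * p s₀ + 2 * a * b * x s₀ = m := by
      rw [← hy, ← hx]; ring
    have hT : ∀ s ∈ T, ¬p s ∣ m := fun s hs => hdvd s (mem_insert_of_mem hs)
    have hs₀m : ¬p s₀ ∣ m := hdvd s₀ (mem_insert_self s₀ T)
    by_cases hb0 : b = 0
    · exact ih hm hm1 hT (by rwa [hb0, zero_mul, add_zero] at hy) (by simpa [hb0] using ha)
    by_cases ha0 : a = 0
    · -- `y = b x s₀`, so `b p s₀ ∈ K` is a square root of `m p s₀`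
      refine ih (m := m * p s₀) ?_ ?_ ?_ (y := b * p s₀) ?_ (mul_mem hb (natCast_mem K _))
      · have hcop : m.Coprime (p s₀) := Nat.coprime_comm.mp ((hp s₀).coprime_iff_not_dvd.mpr hs₀m)
        exact (Nat.squarefree_mul hcop).mpr ⟨hm, (hp s₀).squarefree⟩
      · exact fun h => (hp s₀).ne_one (mul_eq_one.mp h).2
      · intro s hs hdvd
        rcases (hp s).dvd_mul.mp hdvd with hsm | hss₀
        · exact hT s hs hsm
        · exact hs₀ (hinj ((Nat.prime_dvd_prime_iff_eq (hp s) (hp s₀)).mp hss₀) ▸ hs)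
      · rw [ha0, zero_add, mul_pow, hx] at hy
        push_cast
        rw [← hy]
        ring
    · refine ih (hp s₀).squarefree (hp s₀).one_lt.ne' (fun s hs hdvd => hs₀ ?_) (hx s₀) ?_
      · rwa [← hinj ((Nat.prime_dvd_prime_iff_eq (hp s) (hp s₀)).mp hdvd)]
      · have : x s₀ = (m - a ^ 2 - b ^ 2 * p s₀) / (2 * a * b) := by
          rw [← hsq]; field_simp; ring
        rw [this]
        exact div_mem (sub_mem (sub_mem (natCast_mem _ m) (pow_mem ha 2))
          (mul_mem (pow_mem hb 2) (natCast_mem _ _)))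
          (mul_mem (mul_mem (ofNat_mem K 2) ha) hb)

theorem linearIndepOn_prod_powerset (hp : ∀ s, (p s).Prime) (hinj : Injective p)
    (hx : ∀ s, x s ^ 2 = p s) (T : Finset I) :
    LinearIndepOn ℚ (fun S : Finset I => ∏ s ∈ S, x s) (T.powerset : Set (Finset I)) := by
  classical
  induction T using Finset.induction_on with
  | empty => simp
  | @insert s₀ T hs₀ ih =>
    set K := IntermediateField.adjoin ℚ (x '' T)
    have hK : ∀ g : Finset I → ℚ, ∑ S ∈ T.powerset, g S • ∏ s ∈ S, x s ∈ K := fun g =>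
      sum_mem fun S hS => SMulMemClass.smul_mem _ (prod_mem fun s hs =>
        IntermediateField.subset_adjoin ℚ _ ⟨s, mem_powerset.mp hS hs, rfl⟩)
    rw [linearIndepOn_finset_iff] at ih ⊢
    intro f hf
    set A := ∑ S ∈ T.powerset, f S • ∏ s ∈ S, x s
    set B := ∑ S ∈ T.powerset, f (insert s₀ S) • ∏ s ∈ S, x s
    have hAB : A + B * x s₀ = 0 := by
      rw [← hf, sum_powerset_insert hs₀, sum_mul]
      congr 1
      refine sum_congr rfl fun S hS => ?_
      rw [prod_insert fun h => hs₀ (mem_powerset.mp hS h), smul_mul_assoc, mul_comm]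
    have hB : B = 0 := by
      by_contra hB
      refine notMem_adjoin_of_sq_eq hp hinj hx T (hp s₀).squarefree (hp s₀).one_lt.ne'
        (fun s hs hdvd => hs₀ ?_) (hx s₀) ?_
      · rwa [← hinj ((Nat.prime_dvd_prime_iff_eq (hp s) (hp s₀)).mp hdvd)]
      · rw [show x s₀ = -A / B by field_simp; linear_combination hAB]
        exact div_mem (neg_mem (hK f)) (hK _)
    have hA : A = 0 := by rwa [hB, zero_mul, add_zero] at hAB
    intro S hS
    rw [mem_powerset, subset_insert_iff] at hS
    by_cases hs₀S : s₀ ∈ S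
    · rw [← insert_erase hs₀S]
      exact ih (fun S => f (insert s₀ S)) hB _ (mem_powerset.mpr hS)
    · rw [erase_eq_of_notMem hs₀S] at hS
      exact ih f hA S (mem_powerset.mpr hS)

theorem linearIndependent_prod [Fintype I] (hp : ∀ s, (p s).Prime) (hinj : Injective p)
    (hx : ∀ s, x s ^ 2 = p s) :
    LinearIndependent ℚ (fun S : Finset I => ∏ s ∈ S, x s) := by
  simpa [linearIndepOn_univ_iff] using linearIndepOn_prod_powerset hp hinj hx univ

theorem aeval_eq_zero_of_sq_eq [Fintype I] (hp : ∀ s, (p s).Prime) (hinj : Injective p)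
    {x' : I → ℝ} (hx : ∀ s, x s ^ 2 = p s) (hx' : ∀ s, x' s ^ 2 = p s)
    {P : MvPolynomial I ℤ} (hP : MvPolynomial.aeval x P = 0) :
    MvPolynomial.aeval x' P = 0 := by
  obtain ⟨c, hc⟩ :=
    MvPolynomial.exists_aeval_eq_sum_prod_of_sq_eq (A := ℝ) (fun s => (p s : ℤ)) P
  have hsq : ∀ {y : I → ℝ}, (∀ s, y s ^ 2 = p s) →
      ∀ s, y s ^ 2 = algebraMap ℤ ℝ (p s) := by
    intro y hy s
    simp [hy]
  have hc0 : c = 0 := funext <| Fintype.linearIndependent_iff.mp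
    ((linearIndependent_prod hp hinj hx).restrict_scalars' ℤ) c (hc x (hsq hx) ▸ hP)
  simp [hc x' (hsq hx'), hc0]

end SqrtPrimes

noncomputable def signedSqrtSum {J : Type*} [Fintype J] (p : J → ℕ) (v : J → Bool) : ℝ :=
  ∑ j, (if v j then -1 else 1) * √(p j)

theorem signedSqrtSum_injective {J : Type*} [Fintype J] {p : J → ℕ}
    (hp : ∀ j, (p j).Prime) (hinj : Injective p) : Injective (signedSqrtSum p) := by
  intro v w h
  have hli : LinearIndependent ℤ fun j => √(p j) := by
    have := (linearIndependent_prod hp hinj fun j => Real.sq_sqrt (Nat.cast_nonneg _)).comp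
      _ singleton_injective
    simpa [comp_def] using this.restrict_scalars' ℤ
  have hsign := linearIndependent_iff'ₛ.mp hli univ (fun j => if v j then -1 else 1)
    (fun j => if w j then -1 else 1) (by simpa [signedSqrtSum, ite_smul] using h)
  funext j
  have := hsign j (mem_univ j)
  cases hv : v j <;> cases hw : w j <;> simp [hv, hw] at this ⊢

theorem aeval_signedSqrtSum_eq_zero {ι : Type*} [Fintype ι] {J : ι → Type*}
    [∀ i, Fintype (J i)] {p : (i : ι) → J i → ℕ}
    (hp : ∀ i j, (p i j).Prime) (hinj : Injective fun s : Σ i, J i => p s.1 s.2)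
    {Q : MvPolynomial ι ℤ} {b : (i : ι) → J i → Bool}
    (hQ : MvPolynomial.aeval (fun i => signedSqrtSum (p i) (b i)) Q = 0)
    (v : (i : ι) → J i → Bool) :
    MvPolynomial.aeval (fun i => signedSqrtSum (p i) (v i)) Q = 0 := by
  let P := MvPolynomial.bind₁ (fun i => ∑ j : J i, MvPolynomial.X (Sigma.mk i j)) Q
  let point (v : (i : ι) → J i → Bool) (s : Σ i, J i) : ℝ :=
    (if v s.1 s.2 then -1 else 1) * √(p s.1 s.2)
  have hpoint : ∀ v, MvPolynomial.aeval (point v) P =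
      MvPolynomial.aeval (fun i => signedSqrtSum (p i) (v i)) Q := by
    intro v
    simp [P, point, MvPolynomial.aeval_bind₁, signedSqrtSum]
  have hsq : ∀ v s, point v s ^ 2 = p s.1 s.2 := by
    intro v s
    simp [point]
  rw [← hpoint] at hQ ⊢
  exact aeval_eq_zero_of_sq_eq (fun s => hp s.1 s.2) hinj (hsq b) (hsq v) hQ

theorem MvPolynomial.eq_zero_of_aeval_zero_at_prod_finset {R K σ : Type*} [CommRing R]
    [CommRing K] [IsDomain K] [Algebra R K] [FaithfulSMul R K] [Finite σ]
    (Q : MvPolynomial σ R) (S : σ → Finset K) (hdeg : ∀ i, Q.degreeOf i < #(S i))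
    (heval : ∀ x : σ → K, (∀ i, x i ∈ S i) → aeval x Q = 0) : Q = 0 := by
  have hinj := FaithfulSMul.algebraMap_injective R K
  apply map_injective _ hinj
  rw [map_zero]
  refine eq_zero_of_eval_zero_at_prod_finset _ S (fun i => ?_) fun x hx => ?_
  · rw [degreeOf, degrees_map_of_injective _ hinj]
    exact hdeg i
  · rw [← aeval_eq_eval, aeval_map_algebraMap]
    exact heval x hx

theorem eq_zero_of_aeval_signedSqrtSum_eq_zero {ι : Type*} [Finite ι] {J : ι → Type*}
    [∀ i, Fintype (J i)] {p : (i : ι) → J i → ℕ}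
    (hp : ∀ i j, (p i j).Prime) (hinj : ∀ i, Injective (p i)) {Q : MvPolynomial ι ℤ}
    (hdeg : ∀ i, Q.degreeOf i < 2 ^ Fintype.card (J i))
    (hQ : ∀ v : (i : ι) → J i → Bool,
      MvPolynomial.aeval (fun i => signedSqrtSum (p i) (v i)) Q = 0) :
    Q = 0 := by
  classical
  refine MvPolynomial.eq_zero_of_aeval_zero_at_prod_finset Q
    (fun i => univ.image (signedSqrtSum (p i))) (fun i => ?_) fun y hy => ?_
  · rw [card_image_of_injective _ (signedSqrtSum_injective (hp i) (hinj i)), card_univ,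
      Fintype.card_fun, Fintype.card_bool]
    exact hdeg i
  · choose v _ hv using fun i => mem_image.mp (hy i)
    rw [← funext hv]
    exact hQ v

/-- Let `p i j` (for `i : Fin q`, `j : Fin (k i)`) be pairwise
distinct primes, `b i j` arbitrary bits, and `π i = ∑ j, (-1)^(b i j) * √(p i j)`.
If `Q` is an integer polynomial whose degree in each variable `x_i` is less than
`2 ^ k i`, then `Q ≠ 0` iff `Q(π_1, …, π_q) ≠ 0`. -/
theorem stmt_0 (q : ℕ) (k : Fin q → ℕ)
    (p : (i : Fin q) → Fin (k i) → ℕ) (hp : ∀ i j, (p i j).Prime)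
    (hinj : Function.Injective fun x : Σ i : Fin q, Fin (k i) => p x.1 x.2)
    (b : (i : Fin q) → Fin (k i) → Bool)
    (Q : MvPolynomial (Fin q) ℤ) (hdeg : ∀ i, Q.degreeOf i < 2 ^ k i) :
    Q ≠ 0 ↔
      MvPolynomial.aeval
        (fun i => ∑ j, (if b i j then (-1 : ℝ) else 1) * Real.sqrt (p i j)) Q ≠ 0 := by
  refine ⟨fun hQ hval => hQ ?_, mt fun hQ => by rw [hQ, map_zero]⟩
  exact eq_zero_of_aeval_signedSqrtSum_eq_zero hp (fun i => hinj.comp sigma_mk_injective)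
    (by simpa using hdeg) (aeval_signedSqrtSum_eq_zero hp hinj (b := b) hval)
end

section
/- Let p_1,…,p_K be pairwise distinct prime numbers. Then the field extension ℚ(√p_1,…,√p_K) of ℚ generated by the positive real square roots √p_1,…,√p_K has degree exactly 2^K over ℚ. -/
/-!
Write `F = ℚ(√q : q ∈ S)` for a finite set `S` of primes. By induction on `S`, `√d ∉ F` for every
squarefree `d ≠ 1` prime to all of `S`: an element of `F(√p)` has the form `a + b√p` with
`a, b ∈ F`, and if `(a + b√p)² = d` then the cross term `2ab√p` lies in `F`, so `ab = 0` because
`√p ∉ F`. Thus `√d ∈ F` or `√(dp) ∈ F`, both excluded by induction. In particular every new `√p`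
is a quadratic step, and the degree doubles.
-/

open IntermediateField Polynomial

namespace IntermediateField

variable {K L : Type*} [Field K] [Field L] [Algebra K L] (F : IntermediateField K L) {α : L}

theorem isIntegral_of_sq_mem (hα : α ^ 2 ∈ F) : IsIntegral F α :=
  ⟨X ^ 2 - C ⟨α ^ 2, hα⟩, monic_X_pow_sub_C _ two_ne_zero, by simp⟩

theorem exists_eq_add_mul_of_mem_adjoin_simple (hα : α ^ 2 ∈ F) {x : L} (hx : x ∈ F⟮α⟯) :
    ∃ a ∈ F, ∃ b ∈ F, x = a + b * α := by
  rw [← mem_toSubalgebra,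
    adjoin_simple_toSubalgebra_of_isAlgebraic (isIntegral_of_sq_mem F hα).isAlgebraic] at hx
  induction hx using Algebra.adjoin_induction with
  | mem y hy =>
    rw [Set.mem_singleton_iff.1 hy]
    exact ⟨0, F.zero_mem, 1, F.one_mem, by ring⟩
  | algebraMap r => exact ⟨r, r.2, 0, F.zero_mem, by simp⟩
  | add y z _ _ hy hz =>
    obtain ⟨a, ha, b, hb, rfl⟩ := hy
    obtain ⟨c, hc, d, hd, rfl⟩ := hz
    exact ⟨a + c, F.add_mem ha hc, b + d, F.add_mem hb hd, by ring⟩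
  | mul y z _ _ hy hz =>
    obtain ⟨a, ha, b, hb, rfl⟩ := hy
    obtain ⟨c, hc, d, hd, rfl⟩ := hz
    refine ⟨a * c + b * d * α ^ 2, F.add_mem (F.mul_mem ha hc) (F.mul_mem (F.mul_mem hb hd) hα),
      a * d + b * c, F.add_mem (F.mul_mem ha hd) (F.mul_mem hb hc), by ring⟩

theorem mem_or_mul_mem_of_mem_adjoin_simple [NeZero (2 : L)] (hα : α ^ 2 ∈ F) (hαF : α ∉ F)
    {x : L} (hx : x ∈ F⟮α⟯) (hx2 : x ^ 2 ∈ F) : x ∈ F ∨ x * α ∈ F := by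
  obtain ⟨a, ha, b, hb, rfl⟩ := exists_eq_add_mul_of_mem_adjoin_simple F hα hx
  have hcross : 2 * a * b * α ∈ F := by
    have : 2 * a * b * α = (a + b * α) ^ 2 - a ^ 2 - b ^ 2 * α ^ 2 := by ring
    rw [this]
    exact F.sub_mem (F.sub_mem hx2 (pow_mem ha 2)) (F.mul_mem (pow_mem hb 2) hα)
  have hab : a = 0 ∨ b = 0 := by
    by_contra! h
    have h2ab : 2 * a * b ≠ 0 := mul_ne_zero (mul_ne_zero two_ne_zero h.1) h.2
    refine hαF ?_
    rw [← inv_mul_cancel_left₀ h2ab α]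
    exact F.mul_mem (F.inv_mem (F.mul_mem (F.mul_mem (ofNat_mem F 2) ha) hb)) hcross
  rcases hab with rfl | rfl
  · right
    rw [show (0 + b * α) * α = b * α ^ 2 by ring]
    exact F.mul_mem hb hα
  · left
    simpa using ha

theorem finrank_adjoin_simple_of_sq_mem (hα : α ^ 2 ∈ F) (hαF : α ∉ F) :
    Module.finrank F F⟮α⟯ = 2 := by
  have hint := isIntegral_of_sq_mem F hα
  rw [adjoin.finrank hint]
  have hle : (minpoly F α).natDegree ≤ 2 := by
    have := minpoly.min F α (monic_X_pow_sub_C (⟨α ^ 2, hα⟩ : F) two_ne_zero) (by simp)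
    rw [degree_X_pow_sub_C two_pos] at this
    exact natDegree_le_of_degree_le this
  have hne : (minpoly F α).natDegree ≠ 1 := fun h =>
    hαF (by simpa using minpoly.natDegree_eq_one_iff.1 h)
  have hpos := minpoly.natDegree_pos hint
  omega

end IntermediateField

noncomputable def adjoinSqrt (S : Finset ℕ) : IntermediateField ℚ ℝ :=
  adjoin ℚ ((fun q : ℕ => √(q : ℝ)) '' S)

theorem adjoinSqrt_insert (p : ℕ) (S : Finset ℕ) :
    adjoinSqrt (insert p S) = ((adjoinSqrt S)⟮√(p : ℝ)⟯).restrictScalars ℚ := by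
  rw [adjoinSqrt, adjoinSqrt, Finset.coe_insert, Set.image_insert_eq, ← Set.union_singleton]
  exact (adjoin_adjoin_left ℚ _ _).symm

theorem sq_sqrt_mem_adjoinSqrt (S : Finset ℕ) (d : ℕ) : √(d : ℝ) ^ 2 ∈ adjoinSqrt S := by
  rw [Real.sq_sqrt d.cast_nonneg]
  exact IntermediateField.natCast_mem _ d

theorem sqrt_notMem_adjoinSqrt {S : Finset ℕ} (hS : ∀ q ∈ S, q.Prime) {d : ℕ} (hd : Squarefree d)
    (hd1 : d ≠ 1) (hdS : ∀ q ∈ S, ¬ q ∣ d) : √(d : ℝ) ∉ adjoinSqrt S := by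
  induction S using Finset.induction_on generalizing d with
  | empty =>
    rw [adjoinSqrt, Finset.coe_empty, Set.image_empty, adjoin_empty, mem_bot]
    rintro ⟨r, hr⟩
    refine (irrational_sqrt_natCast_iff.2 fun ⟨m, hm⟩ => hd1 ?_) ⟨r, hr⟩
    rw [hm, Nat.isUnit_iff.1 (hd m (hm ▸ dvd_rfl)), mul_one]
  | @insert p S hpS IH =>
    have hp := hS p (Finset.mem_insert_self p S)
    replace hS q hq := hS q (Finset.mem_insert_of_mem hq)
    have hqp (q) (hq : q ∈ S) : ¬ q ∣ p := fun h =>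
      hpS ((Nat.prime_dvd_prime_iff_eq (hS q hq) hp).1 h ▸ hq)
    have hpF : √(p : ℝ) ∉ adjoinSqrt S := IH hS hp.squarefree hp.ne_one hqp
    intro hmem
    rw [adjoinSqrt_insert, mem_restrictScalars] at hmem
    rcases mem_or_mul_mem_of_mem_adjoin_simple _ (sq_sqrt_mem_adjoinSqrt S p) hpF hmem
      (sq_sqrt_mem_adjoinSqrt S d) with hdF | hdpF
    · exact IH hS hd hd1 (fun q hq => hdS q (Finset.mem_insert_of_mem hq)) hdF
    · have hdp : Squarefree (d * p) := Nat.squarefree_mul_iff.2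
        ⟨((hp.coprime_iff_not_dvd).2 (hdS p (Finset.mem_insert_self p S))).symm, hd, hp.squarefree⟩
      refine IH hS hdp (fun h => hp.ne_one (Nat.eq_one_of_mul_eq_one_left h)) (fun q hq h => ?_) ?_
      · rcases (hS q hq).dvd_mul.1 h with h | h
        exacts [hdS q (Finset.mem_insert_of_mem hq) h, hqp q hq h]
      · rwa [Nat.cast_mul, Real.sqrt_mul d.cast_nonneg]

theorem sqrt_prime_notMem_adjoinSqrt {S : Finset ℕ} (hS : ∀ q ∈ S, q.Prime) {p : ℕ}
    (hp : p.Prime) (hpS : p ∉ S) : √(p : ℝ) ∉ adjoinSqrt S :=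
  sqrt_notMem_adjoinSqrt hS hp.squarefree hp.ne_one
    fun q hq h => hpS ((Nat.prime_dvd_prime_iff_eq (hS q hq) hp).1 h ▸ hq)

theorem finrank_adjoinSqrt {S : Finset ℕ} (hS : ∀ q ∈ S, q.Prime) :
    Module.finrank ℚ (adjoinSqrt S) = 2 ^ S.card := by
  induction S using Finset.induction_on with
  | empty =>
    rw [adjoinSqrt, Finset.coe_empty, Set.image_empty, adjoin_empty,
      IntermediateField.finrank_bot, Finset.card_empty, pow_zero]
  | @insert p S hpS IH =>
    have hp := hS p (Finset.mem_insert_self p S)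
    replace hS q hq := hS q (Finset.mem_insert_of_mem hq)
    have hpF := sqrt_prime_notMem_adjoinSqrt hS hp hpS
    have := Module.finrank_mul_finrank ℚ (adjoinSqrt S) (adjoinSqrt S)⟮√(p : ℝ)⟯
    rw [adjoinSqrt_insert, Finset.card_insert_of_notMem hpS, pow_succ, ← IH hS,
      ← finrank_adjoin_simple_of_sq_mem _ (sq_sqrt_mem_adjoinSqrt S p) hpF, this]
    rfl

/-- For pairwise distinct primes `p 1, …, p K`, the field
`ℚ(√p 1, …, √p K)` has degree exactly `2 ^ K` over `ℚ`. -/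
theorem stmt_1 (K : ℕ) (p : Fin K → ℕ) (hp : ∀ i, (p i).Prime)
    (hinj : Function.Injective p) :
    Module.finrank ℚ
      ↥(IntermediateField.adjoin ℚ (Set.range fun i => Real.sqrt (p i))) = 2 ^ K := by
  have hadjoin : adjoin ℚ (Set.range fun i => √(p i : ℝ)) = adjoinSqrt (Finset.univ.image p) := by
    rw [adjoinSqrt, Finset.coe_image, Finset.coe_univ, Set.image_univ, ← Set.range_comp]
    rfl
  rw [hadjoin, finrank_adjoinSqrt (by simpa using hp), Finset.card_image_of_injective _ hinj,
    Finset.card_univ, Fintype.card_fin]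
end

section
/- Let p_{1,1},…,p_{1,k_1},…,p_{q,1},…,p_{q,k_q} be pairwise distinct prime numbers (each k_i ≥ 1), let ε_{i,j} ∈ {−1,+1} be arbitrary signs, and for each i set π_i = Σ_{j=1}^{k_i} ε_{i,j} √p_{i,j}. Then the subfield of ℝ generated over ℚ by π_1,…,π_q equals the subfield generated over ℚ by all the square roots √p_{i,j}, 1 ≤ i ≤ q, 1 ≤ j ≤ k_i. -/
/-!
Every `ℚ`-embedding of `L = ℚ(√p_{i,j})` into `ℂ` sends each `√p` to `±√p`. If two embeddings
`σ, τ` agree on `π_i`, then `σ(π_i) - τ(π_i) = 0` is the image under `τ` of the rational relation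
`2 ∑_{j ∈ J} ε_{i,j} √p_{i,j} = 0`, where `J` is the set of indices on which `σ` and `τ` differ;
square roots of distinct primes are `ℚ`-linearly independent, so `J = ∅`. Hence restriction to
`F = ℚ(π_1, …, π_q)` is injective on embeddings into `ℂ`, so `[L : ℚ] ≤ [F : ℚ]` and `F = L`.

Linear independence comes from the classical induction: a square root of a squarefree `m > 1` does
not lie in `ℚ(√r : r ∈ S)` when no prime of `S` divides `m`, because an element of a quadratic
extension `K(√a)` whose square lies in `K` lies in `K` or in `K · √a`.
-/

open IntermediateField

theorem IsIntegral.of_sq_eq_algebraMap {R A : Type*} [CommRing R] [Ring A] [Algebra R A] {x : A}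
    {c : R} (h : x ^ 2 = algebraMap R A c) : IsIntegral R x :=
  .of_pow two_pos (h ▸ isIntegral_algebraMap)

theorem Squarefree.isUnit_of_isSquare {R : Type*} [Monoid R] {r : R} (hr : Squarefree r)
    (hsq : IsSquare r) : IsUnit r := by
  obtain ⟨d, rfl⟩ := hsq
  exact (hr d dvd_rfl).mul (hr d dvd_rfl)

namespace IntermediateField

variable {F E : Type*} [Field F] [Field E] [Algebra F E]

theorem exists_eq_add_mul_of_mem_adjoin_simple_s2 {α y : E}
    (hα : α ^ 2 ∈ (⊥ : IntermediateField F E)) (hy : y ∈ F⟮α⟯) :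
    ∃ u ∈ (⊥ : IntermediateField F E), ∃ v ∈ (⊥ : IntermediateField F E), y = u + v * α := by
  have hint : IsIntegral F α := by
    obtain ⟨c, hc⟩ := mem_bot.mp hα
    exact .of_sq_eq_algebraMap hc.symm
  rw [← mem_toSubalgebra, adjoin_simple_toSubalgebra_of_isAlgebraic hint.isAlgebraic] at hy
  induction hy using Algebra.adjoin_induction with
  | mem x hx =>
    obtain rfl := Set.mem_singleton_iff.mp hx
    exact ⟨0, zero_mem _, 1, one_mem _, by ring⟩
  | algebraMap r => exact ⟨_, algebraMap_mem _ r, 0, zero_mem _, by ring⟩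
  | add _ _ _ _ hx hy =>
    obtain ⟨a, ha, b, hb, rfl⟩ := hx
    obtain ⟨c, hc, d, hd, rfl⟩ := hy
    exact ⟨a + c, add_mem ha hc, b + d, add_mem hb hd, by ring⟩
  | mul _ _ _ _ hx hy =>
    obtain ⟨a, ha, b, hb, rfl⟩ := hx
    obtain ⟨c, hc, d, hd, rfl⟩ := hy
    exact ⟨a * c + b * d * α ^ 2, add_mem (mul_mem ha hc) (mul_mem (mul_mem hb hd) hα),
      a * d + b * c, add_mem (mul_mem ha hd) (mul_mem hb hc), by ring⟩

theorem mem_bot_or_mul_mem_bot_of_mem_adjoin_simple [NeZero (2 : E)] {α y : E}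
    (hα : α ^ 2 ∈ (⊥ : IntermediateField F E)) (hαF : α ∉ (⊥ : IntermediateField F E))
    (hy : y ∈ F⟮α⟯) (hy2 : y ^ 2 ∈ (⊥ : IntermediateField F E)) :
    y ∈ (⊥ : IntermediateField F E) ∨ y * α ∈ (⊥ : IntermediateField F E) := by
  obtain ⟨u, hu, v, hv, rfl⟩ := exists_eq_add_mul_of_mem_adjoin_simple_s2 hα hy
  by_cases hv0 : v = 0
  · left
    simpa [hv0] using hu
  by_cases hu0 : u = 0
  · right
    rw [hu0, zero_add, mul_assoc, ← sq]
    exact mul_mem hv hα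
  refine absurd ?_ hαF
  have hαeq : α = ((u + v * α) ^ 2 - u ^ 2 - v ^ 2 * α ^ 2) / (2 * u * v) := by
    field_simp
    ring
  rw [hαeq]
  exact div_mem (sub_mem (sub_mem hy2 (pow_mem hu 2)) (mul_mem (pow_mem hv 2) hα))
    (mul_mem (mul_mem (ofNat_mem _ 2) hu) hv)

theorem eq_of_le_of_injective_comp_inclusion {K L C : Type*} [Field K] [Field L] [Algebra K L]
    [Field C] [Algebra K C] [IsAlgClosed C] {F E : IntermediateField K L}
    [FiniteDimensional K E] [Algebra.IsSeparable K E] (hle : F ≤ E)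
    (hinj : Function.Injective fun σ : E →ₐ[K] C => σ.comp (inclusion hle)) : F = E := by
  have : FiniteDimensional K F := .of_injective (inclusion hle).toLinearMap (inclusion_injective hle)
  have : Algebra.IsSeparable K F := .of_algHom _ _ (inclusion hle)
  refine eq_of_le_of_finrank_le hle ?_
  rw [← AlgHom.card K E C, ← AlgHom.card K F C]
  exact Fintype.card_le_of_injective _ hinj

end IntermediateField

section SqrtPrime

variable {K ι : Type*} [Field K] [CharZero K] {x : ι → K} {p : ι → ℕ}

theorem notMem_adjoin_of_sq_eq_squarefree (hp : ∀ i, (p i).Prime) (hinj : Function.Injective p)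
    (hx : ∀ i, x i ^ 2 = p i) {s : Set ι} (hs : s.Finite) {m : ℕ} (hm : Squarefree m)
    (hm1 : 1 < m) (hdvd : ∀ i ∈ s, ¬ p i ∣ m) {y : K} (hy : y ^ 2 = m) :
    y ∉ adjoin ℚ (x '' s) := by
  induction s, hs using Set.Finite.induction_on generalizing m y with
  | empty =>
    rw [Set.image_empty, adjoin_empty, mem_bot]
    rintro ⟨r, rfl⟩
    have hr : r ^ 2 = m := (algebraMap ℚ K).injective (by rw [map_pow, hy, map_natCast])
    have := hm.isUnit_of_isSquare (Rat.isSquare_natCast_iff.mp ⟨r, hr ▸ sq r⟩)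
    exact hm1.ne' (Nat.isUnit_iff.mp this)
  | @insert a s ha _ ih =>
    set K' := adjoin ℚ (x '' s)
    have hbot : ∀ z, z ∈ (⊥ : IntermediateField K' K) ↔ z ∈ K' := fun z =>
      SetLike.ext_iff.mp (restrictScalars_bot_eq_self K') z
    have hadjoin : adjoin ℚ (x '' insert a s) = (K'⟮x a⟯).restrictScalars ℚ := by
      rw [Set.image_insert_eq, Set.insert_eq, Set.union_comm]
      exact (adjoin_adjoin_left _ _ _).symm
    have hndvd : ∀ i ∈ s, ¬ p i ∣ p a := fun i hi h =>
      ha (hinj ((Nat.prime_dvd_prime_iff_eq (hp i) (hp a)).mp h) ▸ hi)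
    have hxa : x a ∉ K' := ih (hp a).squarefree (hp a).one_lt hndvd (hx a)
    intro hy'
    rw [hadjoin, mem_restrictScalars] at hy'
    have hcast : ∀ n : ℕ, (n : K) ∈ (⊥ : IntermediateField K' K) := fun n => _root_.natCast_mem _ n
    rcases mem_bot_or_mul_mem_bot_of_mem_adjoin_simple (hx a ▸ hcast _) (by rwa [hbot]) hy'
      (hy ▸ hcast _) with h | h
    · exact ih hm hm1 (fun i hi => hdvd i (Set.mem_insert_of_mem a hi)) hy ((hbot y).mp h)
    · have hcop : m.Coprime (p a) :=
        ((Nat.Prime.coprime_iff_not_dvd (hp a)).mpr (hdvd a (Set.mem_insert a s))).symm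
      refine ih (Nat.squarefree_mul_iff.mpr ⟨hcop, hm, (hp a).squarefree⟩)
        (one_lt_mul_of_lt_of_le hm1 (hp a).one_lt.le) (fun i hi hi' => ?_) ?_ ((hbot _).mp h)
      · rcases (Nat.Prime.dvd_mul (hp i)).mp hi' with h' | h'
        · exact hdvd i (Set.mem_insert_of_mem a hi) h'
        · exact hndvd i hi h'
      · rw [mul_pow, hy, hx a]
        push_cast
        ring

theorem linearIndependent_of_sq_eq_prime [Finite ι] (hp : ∀ i, (p i).Prime)
    (hinj : Function.Injective p) (hx : ∀ i, x i ^ 2 = p i) : LinearIndependent ℚ x := by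
  rw [linearIndependent_iff_notMem_span]
  intro i hi
  refine notMem_adjoin_of_sq_eq_squarefree hp hinj hx (Set.toFinite _) (hp i).squarefree
    (hp i).one_lt ?_ (hx i) ((Submodule.span_le (p := (adjoin ℚ _).toSubalgebra.toSubmodule)).mpr
      (subset_adjoin ℚ _) hi)
  rintro j ⟨-, hji⟩ h
  exact hji (hinj ((Nat.prime_dvd_prime_iff_eq (hp j) (hp i)).mp h))

end SqrtPrime

theorem AlgHom.apply_eq_of_apply_sum_eq {K E B ι : Type*} [Field K] [NeZero (2 : K)] [Field E]
    [Algebra K E] [CommRing B] [IsDomain B] [Algebra K B] [Fintype ι] {s : ι → E}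
    (hs : LinearIndependent K s) (hsq : ∀ j, s j ^ 2 ∈ Set.range (algebraMap K E))
    {σ τ : E →ₐ[K] B} (h : σ (∑ j, s j) = τ (∑ j, s j)) (j : ι) : σ (s j) = τ (s j) := by
  classical
  have hpm : ∀ j, σ (s j) = τ (s j) ∨ σ (s j) = -τ (s j) := fun j => by
    obtain ⟨c, hc⟩ := hsq j
    exact sq_eq_sq_iff_eq_or_eq_neg.mp (by rw [← map_pow, ← map_pow, ← hc, σ.commutes, τ.commutes])
  let g : ι → K := fun j => if σ (s j) = τ (s j) then 0 else 2
  have hg : ∑ j, g j • s j = 0 := by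
    apply τ.toRingHom.injective
    calc τ (∑ j, g j • s j) = ∑ j, (τ (s j) - σ (s j)) := by
          rw [map_sum]
          refine Finset.sum_congr rfl fun j _ => ?_
          by_cases hj : σ (s j) = τ (s j)
          · simp [g, hj]
          · rw [show g j = 2 from if_neg hj, (hpm j).resolve_left hj, two_smul, map_add,
              sub_neg_eq_add]
      _ = τ 0 := by rw [Finset.sum_sub_distrib, ← map_sum, ← map_sum, h, sub_self, map_zero]
  by_contra hne
  exact two_ne_zero (α := K) (by simpa [g, hne] using Fintype.linearIndependent_iff.mp hs g hg j)

theorem AlgHom.apply_sqrt_eq_of_apply_signed_sum_eq {ι B : Type*} [Fintype ι] [CommRing B]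
    [IsDomain B] [Algebra ℚ B] {p : ι → ℕ} (hp : ∀ j, (p j).Prime) (hinj : Function.Injective p)
    {ε : ι → ℝ} (hε : ∀ j, ε j = 1 ∨ ε j = -1) {L : IntermediateField ℚ ℝ}
    (hsqrt : ∀ j, √(p j : ℝ) ∈ L) {σ τ : L →ₐ[ℚ] B} {π : L}
    (hπ : (π : ℝ) = ∑ j, ε j * √(p j : ℝ)) (h : σ π = τ π) (j : ι) :
    σ ⟨_, hsqrt j⟩ = τ ⟨_, hsqrt j⟩ := by
  let s : ι → L := fun j => ⟨ε j * √(p j : ℝ), by rcases hε j with h | h <;> simp [h, hsqrt]⟩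
  have hs : LinearIndependent ℚ s := .of_comp L.val.toLinearMap <|
    linearIndependent_of_sq_eq_prime hp hinj fun j => by rcases hε j with h | h <;> simp [s, h]
  have hsq : ∀ j, s j ^ 2 ∈ Set.range (algebraMap ℚ L) := fun j =>
    ⟨p j, Subtype.ext <| by rcases hε j with h | h <;> simp [s, h]⟩
  have hsum : π = ∑ j, s j := Subtype.ext (by simp [s, hπ])
  have hsj := AlgHom.apply_eq_of_apply_sum_eq hs hsq (hsum ▸ h) j
  rcases hε j with h | h
  · simpa [s, h] using hsj
  · have hneg : s j = -⟨_, hsqrt j⟩ := Subtype.ext (by simp [s, h])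
    rw [hneg, map_neg, map_neg] at hsj
    exact neg_injective hsj

theorem stmt_2_general (q : ℕ) (k : Fin q → ℕ)
    (p : (i : Fin q) → Fin (k i) → ℕ) (hp : ∀ i j, (p i j).Prime)
    (hinj : Function.Injective fun x : Σ i : Fin q, Fin (k i) => p x.1 x.2)
    (ε : (i : Fin q) → Fin (k i) → ℝ) (hε : ∀ i j, ε i j = 1 ∨ ε i j = -1) :
    IntermediateField.adjoin ℚ
        (Set.range fun i : Fin q => ∑ j, ε i j * Real.sqrt (p i j)) =
      IntermediateField.adjoin ℚ
        {x : ℝ | ∃ (i : Fin q) (j : Fin (k i)), x = Real.sqrt (p i j)} := by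
  set L := adjoin ℚ {x : ℝ | ∃ (i : Fin q) (j : Fin (k i)), x = Real.sqrt (p i j)}
  have hsqrt_mem : ∀ i j, √(p i j : ℝ) ∈ L := fun i j => subset_adjoin ℚ _ ⟨i, j, rfl⟩
  have hle : adjoin ℚ (Set.range fun i => ∑ j, ε i j * √(p i j : ℝ)) ≤ L :=
    adjoin_le_iff.mpr <| Set.range_subset_iff.mpr fun i => sum_mem fun j _ => by
      rcases hε i j with h | h <;> simp [h, hsqrt_mem]
  have : Finite {x : ℝ | ∃ (i : Fin q) (j : Fin (k i)), x = Real.sqrt (p i j)} :=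
    ((Set.finite_range fun x : Σ i, Fin (k i) => √(p x.1 x.2 : ℝ)).subset
      (by rintro _ ⟨i, j, rfl⟩; exact ⟨⟨i, j⟩, rfl⟩)).to_subtype
  have : FiniteDimensional ℚ L := finiteDimensional_adjoin <| by
    rintro _ ⟨i, j, rfl⟩
    exact .of_sq_eq_algebraMap (c := (p i j : ℚ)) (by simp)
  refine eq_of_le_of_injective_comp_inclusion (C := ℂ) hle fun σ τ hστ => adjoin_algHom_ext ℚ ?_
  rintro _ ⟨i, j, rfl⟩
  exact AlgHom.apply_sqrt_eq_of_apply_signed_sum_eq (hp i) (hinj.comp sigma_mk_injective) (hε i)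
    (hsqrt_mem i) (π := inclusion hle ⟨_, subset_adjoin ℚ _ ⟨i, rfl⟩⟩) rfl
    (DFunLike.congr_fun hστ _) j

/-- For pairwise distinct primes `p i j` (each `k i ≥ 1`) and
signs `ε i j ∈ {−1, +1}`, with `π i = ∑ j, ε i j * √(p i j)`, the subfield of `ℝ`
generated over `ℚ` by `π_1, …, π_q` equals the subfield generated over `ℚ` by all
the square roots `√(p i j)`. -/
theorem stmt_2 (q : ℕ) (k : Fin q → ℕ) (hk : ∀ i, 1 ≤ k i)
    (p : (i : Fin q) → Fin (k i) → ℕ) (hp : ∀ i j, (p i j).Prime)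
    (hinj : Function.Injective fun x : Σ i : Fin q, Fin (k i) => p x.1 x.2)
    (ε : (i : Fin q) → Fin (k i) → ℝ) (hε : ∀ i j, ε i j = 1 ∨ ε i j = -1) :
    IntermediateField.adjoin ℚ
        (Set.range fun i : Fin q => ∑ j, ε i j * Real.sqrt (p i j)) =
      IntermediateField.adjoin ℚ
        {x : ℝ | ∃ (i : Fin q) (j : Fin (k i)), x = Real.sqrt (p i j)} :=
  stmt_2_general q k p hp hinj ε hε
end

section
/- Let p_{1,1},…,p_{1,k_1},…,p_{q,1},…,p_{q,k_q} be K = k_1+⋯+k_q pairwise distinct prime numbers and let Q(x_1,…,x_q) be a polynomial with integer coefficients. For each assignment b of bits b_{i,j} ∈ {0,1} (1 ≤ i ≤ q, 1 ≤ j ≤ k_i), set π_i(b) = Σ_{j=1}^{k_i} (−1)^{b_{i,j}} √p_{i,j}. Then the product, over all 2^K bit assignments b, of the real numbers Q(π_1(b),…,π_q(b)) is an integer. -/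
/-!
Replace the square roots by indeterminates: `P = ∏_ε G(±X)` is invariant under every
substitution `X x ↦ -X x`, since such a substitution only permutes the factors. So each monomial
of `P` has even exponents, and evaluating it at `X x = √c x` only involves the integers `c x`.
-/

open MvPolynomial

def signed {σ A : Type*} [Ring A] (ε : σ → Bool) (s : σ → A) : σ → A :=
  fun y => (if ε y then -1 else 1) * s y

theorem map_signed {σ A B F : Type*} [Ring A] [Ring B] [FunLike F A B] [RingHomClass F A B]
    (f : F) (ε : σ → Bool) (s : σ → A) (y : σ) :
    f (signed ε s y) = signed ε (fun z => f (s z)) y := by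
  unfold signed
  split_ifs <;> simp

namespace MvPolynomial

variable {σ R : Type*} [CommRing R] [DecidableEq σ]

noncomputable def negVar (x : σ) : MvPolynomial σ R →ₐ[R] MvPolynomial σ R :=
  aeval (Function.update X x (-X x))

theorem negVar_monomial (x : σ) (m : σ →₀ ℕ) (c : R) :
    negVar x (monomial m c) = (-1) ^ m x • monomial m c := by
  have hsub : ∀ y e, Function.update (X : σ → MvPolynomial σ R) x (-X x) y ^ e
      = (if y = x then (-1) ^ e else 1) * X y ^ e := by
    intro y e
    rcases eq_or_ne y x with rfl | hy
    · rw [Function.update_self, neg_pow, if_pos rfl]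
    · simp [hy]
  have hsign : (m.prod fun y e => if y = x then ((-1) ^ e : MvPolynomial σ R) else 1)
      = (-1) ^ m x := by
    rw [Finsupp.prod_ite_eq']
    split_ifs with hx
    · rfl
    · rw [Finsupp.notMem_support_iff.mp hx, pow_zero]
  rw [negVar, aeval_monomial]
  simp only [hsub]
  rw [Finsupp.prod_mul, hsign, monomial_eq, zsmul_eq_mul]
  simp only [algebraMap_eq, Int.cast_neg, Int.cast_one, Int.cast_pow]
  ring

theorem coeff_negVar (x : σ) (P : MvPolynomial σ R) (m : σ →₀ ℕ) :
    coeff m (negVar x P) = (-1) ^ m x * coeff m P := by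
  induction P using MvPolynomial.induction_on' with
  | monomial m' c =>
    rw [negVar_monomial, coeff_smul, coeff_monomial, zsmul_eq_mul]
    split_ifs with h
    · subst h; simp
    · simp
  | add P₁ P₂ h₁ h₂ => rw [map_add, coeff_add, coeff_add, h₁, h₂, mul_add]

theorem coeff_eq_zero_of_negVar_eq [IsAddTorsionFree R] {P : MvPolynomial σ R} {x : σ}
    (hP : negVar x P = P) {m : σ →₀ ℕ} (hm : Odd (m x)) : coeff m P = 0 := by
  have h := coeff_negVar x P m
  rwa [hP, hm.neg_one_pow, neg_one_mul, eq_comm, neg_eq_self] at h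

theorem aeval_mem_range_of_negVar_eq [IsAddTorsionFree R] {A : Type*} [CommRing A] [Algebra R A]
    {P : MvPolynomial σ R} (hP : ∀ x, negVar x P = P) {s : σ → A}
    (hs : ∀ x, s x ^ 2 ∈ (algebraMap R A).range) : aeval s P ∈ (algebraMap R A).range := by
  rw [aeval_def, eval₂_eq]
  refine Subring.sum_mem _ fun m hm =>
    Subring.mul_mem _ ⟨_, rfl⟩ (Subring.prod_mem _ fun x _ => ?_)
  have heven : Even (m x) := by
    by_contra hodd
    exact mem_support_iff.mp hm (coeff_eq_zero_of_negVar_eq (hP x) (Nat.not_even_iff_odd.mp hodd))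
  obtain ⟨t, ht⟩ := heven
  rw [ht, ← two_mul, pow_mul]
  exact Subring.pow_mem _ (hs x) t

theorem negVar_aeval_signed (x : σ) (ε : σ → Bool) (G : MvPolynomial σ R) :
    negVar x (aeval (signed ε (X : σ → MvPolynomial σ R)) G)
      = aeval (signed (Function.update ε x (!ε x)) X) G := by
  rw [← AlgHom.comp_apply, comp_aeval]
  congr 2
  funext y
  simp only [map_signed, negVar, aeval_X]
  rcases eq_or_ne y x with rfl | hy
  · cases h : ε y <;> simp [signed, h]
  · simp [signed, hy]

theorem prod_aeval_signed_mem_range [Fintype σ] [IsAddTorsionFree R] {A : Type*} [CommRing A]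
    [Algebra R A] (G : MvPolynomial σ R) {s : σ → A}
    (hs : ∀ x, s x ^ 2 ∈ (algebraMap R A).range) :
    ∏ ε : σ → Bool, aeval (signed ε s) G ∈ (algebraMap R A).range := by
  set P := ∏ ε : σ → Bool, aeval (signed ε (X : σ → MvPolynomial σ R)) G
  have hP : ∀ x, negVar x P = P := by
    intro x
    let flipAt : Equiv.Perm (σ → Bool) :=
      Function.Involutive.toPerm (fun ε => Function.update ε x (!ε x)) (by intro ε; simp)
    rw [map_prod]
    simp only [negVar_aeval_signed]
    exact Equiv.prod_comp flipAt fun ε => aeval (signed ε (X : σ → MvPolynomial σ R)) G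
  have h := aeval_mem_range_of_negVar_eq hP hs
  simp only [P, map_prod, ← AlgHom.comp_apply, comp_aeval] at h
  simpa only [map_signed, aeval_X] using h

end MvPolynomial

theorem stmt_4_general (q : ℕ) (k : Fin q → ℕ)
    (p : (i : Fin q) → Fin (k i) → ℕ)
    (Q : MvPolynomial (Fin q) ℤ) :
    ∃ z : ℤ,
      ∏ b : (i : Fin q) → Fin (k i) → Bool,
        MvPolynomial.aeval
          (fun i => ∑ j, (if b i j then (-1 : ℝ) else 1) * Real.sqrt (p i j)) Q
        = (z : ℝ) := by
  have hsq : ∀ x : Σ i, Fin (k i), √(p x.1 x.2 : ℝ) ^ 2 ∈ (algebraMap ℤ ℝ).range :=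
    fun x => ⟨p x.1 x.2, by simp⟩
  obtain ⟨z, hz⟩ := prod_aeval_signed_mem_range (aeval (fun i => ∑ j, X ⟨i, j⟩) Q) hsq
  refine ⟨z, ?_⟩
  rw [← eq_intCast (algebraMap ℤ ℝ), hz, ← (Equiv.piCurry fun _ _ => Bool).prod_comp]
  refine Fintype.prod_congr _ _ fun ε => ?_
  rw [← AlgHom.comp_apply, comp_aeval]
  simp only [map_sum, aeval_X]
  rfl

/-- For pairwise distinct primes `p i j` and an integer polynomial
`Q`, the product over all `2^K` bit assignments `b` of `Q(π_1(b), …, π_q(b))`, where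
`π i (b) = ∑ j, (-1)^(b i j) * √(p i j)`, is an integer. -/
theorem stmt_4 (q : ℕ) (k : Fin q → ℕ)
    (p : (i : Fin q) → Fin (k i) → ℕ) (hp : ∀ i j, (p i j).Prime)
    (hinj : Function.Injective fun x : Σ i : Fin q, Fin (k i) => p x.1 x.2)
    (Q : MvPolynomial (Fin q) ℤ) :
    ∃ z : ℤ,
      ∏ b : (i : Fin q) → Fin (k i) → Bool,
        MvPolynomial.aeval
          (fun i => ∑ j, (if b i j then (-1 : ℝ) else 1) * Real.sqrt (p i j)) Q
        = (z : ℝ) :=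
  stmt_4_general q k p Q
end

section
/- Let N ≥ 1 and let f_1,…,f_N be real numbers such that the absolute value of their product is at least 1 and |f_i| ≤ 2^ψ for every i, where ψ > 0. Then for every real ℓ' > 0, the number of indices i with |f_i| ≥ 2^{−ℓ'} is at least N·ℓ'/(ℓ'+ψ). -/
/-- If `f_1, …, f_N` are reals with `|∏ f_i| ≥ 1` and `|f_i| ≤ 2^ψ`
(`ψ > 0`), then for every `ℓ' > 0` the number of indices with `|f_i| ≥ 2^{−ℓ'}` is at
least `N·ℓ'/(ℓ'+ψ)`. -/
theorem stmt_7 (N : ℕ) (hN : 1 ≤ N) (f : Fin N → ℝ) (ψ : ℝ) (hψ : 0 < ψ)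
    (hprod : 1 ≤ |∏ i, f i|) (hbound : ∀ i, |f i| ≤ (2 : ℝ) ^ ψ) :
    ∀ ℓ' : ℝ, 0 < ℓ' →
      (N : ℝ) * ℓ' / (ℓ' + ψ) ≤
        ((Finset.univ.filter fun i => (2 : ℝ) ^ (-ℓ') ≤ |f i|).card : ℝ) := by
  intro ℓ' hℓ
  set S := Finset.univ.filter fun i => (2 : ℝ) ^ (-ℓ') ≤ |f i| with hS
  set T := Finset.univ.filter fun i => ¬ ((2 : ℝ) ^ (-ℓ') ≤ |f i|) with hT
  have hcard : S.card + T.card = N := by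
    simpa [hS, hT, not_le] using Finset.card_filter_add_card_filter_not
      (s := (Finset.univ : Finset (Fin N))) (p := fun i => (2 : ℝ) ^ (-ℓ') ≤ |f i|)
  have habs : |∏ i, f i| = ∏ i, |f i| := Finset.abs_prod _ _
  have hsplit : (∏ i, |f i|) = (∏ i ∈ S, |f i|) * ∏ i ∈ T, |f i| := by
    rw [hS, hT, Finset.prod_filter_mul_prod_filter_not]
  have hSle : (∏ i ∈ S, |f i|) ≤ ((2 : ℝ) ^ ψ) ^ S.card := by
    calc (∏ i ∈ S, |f i|) ≤ ∏ _i ∈ S, (2 : ℝ) ^ ψ :=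
          Finset.prod_le_prod (fun i _ => abs_nonneg _) (fun i _ => hbound i)
      _ = ((2 : ℝ) ^ ψ) ^ S.card := Finset.prod_const _
  have hTle : (∏ i ∈ T, |f i|) ≤ ((2 : ℝ) ^ (-ℓ')) ^ T.card := by
    calc (∏ i ∈ T, |f i|) ≤ ∏ _i ∈ T, (2 : ℝ) ^ (-ℓ') :=
          Finset.prod_le_prod (fun i _ => abs_nonneg _)
            (fun i hi => le_of_lt (by simpa [hT] using Finset.mem_filter.mp hi |>.2 |> not_le.mp))
      _ = ((2 : ℝ) ^ (-ℓ')) ^ T.card := Finset.prod_const _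
  have h1 : (1 : ℝ) ≤ ((2 : ℝ) ^ ψ) ^ S.card * ((2 : ℝ) ^ (-ℓ')) ^ T.card := by
    have := hprod
    rw [habs, hsplit] at this
    refine this.trans (mul_le_mul hSle hTle (Finset.prod_nonneg fun i _ => abs_nonneg _) ?_)
    positivity
  have hpow : ((2 : ℝ) ^ ψ) ^ S.card * ((2 : ℝ) ^ (-ℓ')) ^ T.card
      = (2 : ℝ) ^ (ψ * S.card + (-ℓ') * T.card) := by
    rw [Real.rpow_add (by norm_num), ← Real.rpow_natCast ((2:ℝ)^ψ),
      ← Real.rpow_natCast ((2:ℝ)^(-ℓ')), ← Real.rpow_mul (by norm_num),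
      ← Real.rpow_mul (by norm_num)]
  have hexp : 0 ≤ ψ * S.card + (-ℓ') * T.card := by
    by_contra h
    push_neg at h
    have : (2 : ℝ) ^ (ψ * S.card + (-ℓ') * T.card) < (2:ℝ) ^ (0:ℝ) :=
      Real.rpow_lt_rpow_left_iff (by norm_num) |>.mpr h
    rw [Real.rpow_zero] at this
    linarith [h1.trans_eq hpow]
  have hNk : (T.card : ℝ) = (N : ℝ) - S.card := by
    have := hcard
    push_cast [← this]
    ring
  rw [hNk] at hexp
  rw [div_le_iff₀ (by linarith)]
  nlinarith
end

section
/- Let G be a graph with n ≥ 1 vertices and m edges. Then the number of perfect matchings of G is at most (2m/n)^n. -/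
open Finset

/-- Auxiliary: the partner function of a perfect matching. -/
noncomputable def pmFun {V : Type*} (G : SimpleGraph V)
    (M : {M : G.Subgraph // M.IsPerfectMatching}) (v : V) : G.neighborSet v :=
  ⟨(M.2.1 (M.2.2 v)).choose, M.1.adj_sub (M.2.1 (M.2.2 v)).choose_spec.1⟩

theorem pmFun_adj {V : Type*} (G : SimpleGraph V)
    (M : {M : G.Subgraph // M.IsPerfectMatching}) (v w : V) :
    M.1.Adj v w ↔ (pmFun G M v : V) = w := by
  constructor
  · intro h
    exact ((M.2.1 (M.2.2 v)).choose_spec.2 w h).symm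
  · rintro rfl
    exact (M.2.1 (M.2.2 v)).choose_spec.1

theorem pmFun_inj {V : Type*} (G : SimpleGraph V) :
    Function.Injective (pmFun G) := by
  intro M M' h
  ext1
  ext v w
  · simp [M.2.2 v, M'.2.2 v]
  · rw [pmFun_adj, pmFun_adj, h]

/-- A graph with `n ≥ 1` vertices and `m` edges has at most
`(2m/n)^n` perfect matchings. -/
theorem stmt_14 {V : Type*} [Fintype V] [DecidableEq V] (G : SimpleGraph V)
    [DecidableRel G.Adj] (n m : ℕ) (hn : n = Fintype.card V) (hn1 : 1 ≤ n)
    (hm : m = G.edgeFinset.card) :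
    (Nat.card {M : G.Subgraph // M.IsPerfectMatching} : ℝ) ≤
      (2 * (m : ℝ) / (n : ℝ)) ^ n := by
  classical
  have key : Nat.card {M : G.Subgraph // M.IsPerfectMatching} ≤ ∏ v : V, G.degree v := by
    calc Nat.card {M : G.Subgraph // M.IsPerfectMatching}
        ≤ Nat.card (∀ v : V, G.neighborSet v) :=
          Nat.card_le_card_of_injective _ (pmFun_inj G)
      _ = ∏ v : V, G.degree v := by
          rw [Nat.card_eq_fintype_card, Fintype.card_pi]
          exact Finset.prod_congr rfl fun v _ => by convert G.card_neighborSet_eq_degree (v := v) using 2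
  have hn0 : (0:ℝ) < n := by positivity
  have amgm : ∏ v : V, ((G.degree v : ℝ)) ^ ((n : ℝ)⁻¹) ≤ 2 * (m:ℝ) / (n:ℝ) := by
    have := Real.geom_mean_le_arith_mean_weighted Finset.univ
      (fun _ : V => (n : ℝ)⁻¹) (fun v => (G.degree v : ℝ))
      (fun i _ => by positivity) (by rw [Finset.sum_const, Finset.card_univ, ← hn, nsmul_eq_mul, mul_inv_cancel₀ (by positivity)])
      (fun i _ => by positivity)
    calc ∏ v : V, ((G.degree v : ℝ)) ^ ((n : ℝ)⁻¹)
        ≤ ∑ v : V, (n : ℝ)⁻¹ * (G.degree v : ℝ) := this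
      _ = (∑ v : V, (G.degree v : ℝ)) / n := by
          rw [← Finset.mul_sum]; ring
      _ = 2 * (m:ℝ) / (n:ℝ) := by
          congr 1
          push_cast [← Nat.cast_sum]
          rw [SimpleGraph.sum_degrees_eq_twice_card_edges, hm]
          push_cast; ring
  have hprod : ((∏ v : V, G.degree v : ℕ) : ℝ)
      = (∏ v : V, ((G.degree v : ℝ)) ^ ((n : ℝ)⁻¹)) ^ n := by
    rw [← Finset.prod_pow]
    push_cast
    refine Finset.prod_congr rfl fun v _ => ?_
    rw [← Real.rpow_natCast (((G.degree v : ℝ)) ^ ((n : ℝ)⁻¹)) n, ← Real.rpow_mul (by positivity)]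
    rw [inv_mul_cancel₀ (by positivity : (n:ℝ) ≠ 0), Real.rpow_one]
  calc (Nat.card {M : G.Subgraph // M.IsPerfectMatching} : ℝ)
      ≤ ((∏ v : V, G.degree v : ℕ) : ℝ) := by exact_mod_cast key
    _ = (∏ v : V, ((G.degree v : ℝ)) ^ ((n : ℝ)⁻¹)) ^ n := hprod
    _ ≤ (2 * (m : ℝ) / (n : ℝ)) ^ n :=
        pow_le_pow_left₀ (Finset.prod_nonneg fun v _ => by positivity) amgm n
end
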